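/- For every n ≥ 3, Player 1 has a winning strategy for RAV(D_n, {r,s}), where D_n = ⟨r,s | r^n = s^2 = rsrs = e⟩. -/
import Mathlib


namespace RelatorGames

variable {G : Type*} [Group G]

/-- The letters available in the relator games: elements of `S` and their inverses. -/
def letters (S : Set G) : Set G := S ∪ (fun g => g⁻¹) '' S

/-- Evaluate a history of moves (most recent letter first) to a group element:
the group element represented by the word built so far. -/
def eval (h : List G) : G := h.reverse.prod

/-- A move `m` is legal after history `h`: it is a letter of `S ∪ S⁻¹` and it is not
the inverse of the immediately preceding letter (no backtracking). -/
def LegalMove (S : Set G) (h : List G) (m : G) : Prop :=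
  m ∈ letters S ∧ ∀ p ∈ h.head?, m ≠ p⁻¹

/-- Appending `m` to the history `h` produces a word equal in `G` to some earlier
prefix of the word (equivalently, the walk in the Cayley graph revisits a vertex). -/
def ClosesCycle (h : List G) (m : G) : Prop :=
  ∃ t, t <:+ h ∧ eval t = eval (m :: h)

/-- A strategy: a choice of next letter given the history (most recent letter first). -/
abbrev Strategy (G : Type*) := List G → G

/-- The sequence of histories arising when the first player (moving at even steps)
uses `σ` and the second player (moving at odd steps) uses `τ`. -/
def hist (σ τ : Strategy G) : ℕ → List G
  | 0 => []
  | k + 1 =>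
      (if k % 2 = 0 then σ (hist σ τ k) else τ (hist σ τ k)) :: hist σ τ k

/-- The move made at step `k` in the play of `σ` against `τ`. -/
def moveAt (σ τ : Strategy G) (k : ℕ) : G :=
  if k % 2 = 0 then σ (hist σ τ k) else τ (hist σ τ k)

/-- Step `j` is uneventful: the move made is legal and does not close a cycle. -/
def Ok (S : Set G) (σ τ : Strategy G) (j : ℕ) : Prop :=
  LegalMove S (hist σ τ j) (moveAt σ τ j) ∧ ¬ ClosesCycle (hist σ τ j) (moveAt σ τ j)

/-- In the play of `σ` against `τ`, the player moving at steps congruent to `p` mod 2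
wins the relator achievement game `REL(G,S)`: at the first eventful step, either it is
that player's turn and they legally close a cycle, or it is the opponent's turn and the
opponent has made an illegal move (in particular, has no legal move). -/
def RelWins (S : Set G) (p : ℕ) (σ τ : Strategy G) : Prop :=
  ∃ k : ℕ, (∀ j < k, Ok S σ τ j) ∧
    ((k % 2 = p ∧ LegalMove S (hist σ τ k) (moveAt σ τ k) ∧
        ClosesCycle (hist σ τ k) (moveAt σ τ k)) ∨
      (k % 2 ≠ p ∧ ¬ LegalMove S (hist σ τ k) (moveAt σ τ k)))

/-- In the play of `σ` against `τ`, the player moving at steps congruent to `p` mod 2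
wins the relator avoidance game `RAV(G,S)`: at the first eventful step it is the
opponent's turn, and the opponent either makes an illegal move (in particular, has no
legal move) or closes a cycle. -/
def RavWins (S : Set G) (p : ℕ) (σ τ : Strategy G) : Prop :=
  ∃ k : ℕ, (∀ j < k, Ok S σ τ j) ∧ k % 2 ≠ p ∧
    (¬ LegalMove S (hist σ τ k) (moveAt σ τ k) ∨ ClosesCycle (hist σ τ k) (moveAt σ τ k))

/-- Player 1 has a winning strategy for `REL(G,S)`. -/
def FirstWinsREL (S : Set G) : Prop :=
  ∃ σ : Strategy G, ∀ τ : Strategy G, RelWins S 0 σ τ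

/-- Player 2 has a winning strategy for `REL(G,S)`. -/
def SecondWinsREL (S : Set G) : Prop :=
  ∃ τ : Strategy G, ∀ σ : Strategy G, RelWins S 1 σ τ

/-- Player 1 has a winning strategy for `RAV(G,S)`. -/
def FirstWinsRAV (S : Set G) : Prop :=
  ∃ σ : Strategy G, ∀ τ : Strategy G, RavWins S 0 σ τ

/-- Player 2 has a winning strategy for `RAV(G,S)`. -/
def SecondWinsRAV (S : Set G) : Prop :=
  ∃ τ : Strategy G, ∀ σ : Strategy G, RavWins S 1 σ τ

end RelatorGames
open RelatorGames

section Aux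
set_option linter.unusedSectionVars false
variable {G : Type*} [Group G]

omit [Group G] in
lemma hist_succ (σ τ : Strategy G) (k : ℕ) :
    hist σ τ (k+1) = moveAt σ τ k :: hist σ τ k := rfl

lemma eval_cons (m : G) (h : List G) : eval (m :: h) = eval h * m := by
  simp [eval]

lemma suffix_hist {σ τ : Strategy G} {k : ℕ} {t : List G}
    (ht : t <:+ hist σ τ k) : ∃ i ≤ k, t = hist σ τ i := by
  induction k with
  | zero => exact ⟨0, le_refl 0, List.suffix_nil.mp ht⟩
  | succ k ih =>
      rw [hist_succ] at ht
      rcases List.suffix_cons_iff.mp ht with h | h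
      · exact ⟨k+1, le_refl _, by rw [h, hist_succ]⟩
      · obtain ⟨i, hi, rfl⟩ := ih h
        exact ⟨i, le_trans hi (Nat.le_succ k), rfl⟩

lemma hist_suffix {σ τ : Strategy G} {i k : ℕ} (h : i ≤ k) :
    hist σ τ i <:+ hist σ τ k := by
  induction k with
  | zero => obtain rfl : i = 0 := Nat.le_zero.mp h; exact List.suffix_refl _
  | succ k ih =>
      rcases Nat.eq_or_lt_of_le h with rfl | h'
      · exact List.suffix_refl _
      · exact (ih (Nat.lt_succ_iff.mp h')).trans
          (by rw [hist_succ]; exact List.suffix_cons _ _)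

lemma eval_ne {S : Set G} {σ τ : Strategy G} {k i j : ℕ}
    (hok : ∀ l < k, Ok S σ τ l) (hij : i < j) (hjk : j ≤ k) :
    eval (hist σ τ i) ≠ eval (hist σ τ j) := by
  cases j with
  | zero => omega
  | succ j' =>
      intro heq
      exact (hok j' (by omega)).2
        ⟨hist σ τ i, hist_suffix (by omega), by rw [← hist_succ]; exact heq⟩

lemma exists_bad [Fintype G] (S : Set G) (σ τ : Strategy G) :
    ∃ k, ¬ Ok S σ τ k := by
  by_contra hc
  push_neg at hc
  have hinj : Function.Injective
      (fun i : Fin (Fintype.card G + 1) => eval (hist σ τ i)) := by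
    intro a b hab
    by_contra hne
    rcases lt_trichotomy (a : ℕ) (b : ℕ) with h | h | h
    · exact eval_ne (k := (b : ℕ)) (fun l _ => hc l) h le_rfl hab
    · exact hne (Fin.ext h)
    · exact eval_ne (k := (a : ℕ)) (fun l _ => hc l) h le_rfl hab.symm
  have := Fintype.card_le_of_injective _ hinj
  simp at this

end Aux

section Main

open DihedralGroup

lemma sr_ne_one {n : ℕ} (i : ZMod n) : (sr i : DihedralGroup n) ≠ 1 := by
  rw [DihedralGroup.one_def]
  exact fun h => by cases h

/-- For every `n ≥ 3`, Player 1 has a winning strategy for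
`RAV(D_n, {r,s})`. -/
theorem rav_dihedral_first_wins (n : ℕ) (hn : 3 ≤ n) :
    FirstWinsRAV ({DihedralGroup.r 1, DihedralGroup.sr 0} : Set (DihedralGroup n)) := by
  haveI : NeZero n := ⟨by omega⟩
  classical
  set S : Set (DihedralGroup n) := {DihedralGroup.r 1, DihedralGroup.sr 0} with hS
  refine ⟨fun _ => DihedralGroup.sr 0, fun τ => ?_⟩
  set σ : Strategy (DihedralGroup n) := fun _ => DihedralGroup.sr 0 with hσ
  have hss : (sr 0 : DihedralGroup n) * sr 0 = 1 := by
    rw [DihedralGroup.one_def]; simp [DihedralGroup.sr_mul_sr]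
  have hmove : ∀ k, k % 2 = 0 → moveAt σ τ k = sr 0 := by
    intro k hk; simp [moveAt, hk, hσ]
  -- key: at an even step with all previous steps Ok, the s-move is fine
  have key : ∀ k, k % 2 = 0 → (∀ l < k, Ok S σ τ l) → Ok S σ τ k := by
    intro k hk hok
    rw [Ok, hmove k hk]
    constructor
    · constructor
      · exact Or.inl (Or.inr rfl)
      · intro p hp
        match k, hk with
        | 0, _ => simp [hist] at hp
        | (k'' + 2), hk =>
          have hk'' : k'' % 2 = 0 := by omega
          rw [hist_succ, List.head?_cons, Option.mem_some_iff] at hp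
          subst hp
          have hleg := (hok (k'' + 1) (by omega)).1.2
          rw [hist_succ, hmove k'' hk''] at hleg
          have h2 := hleg (sr 0) (by simp)
          intro hcontra
          apply h2
          rw [hcontra, inv_inv]
    · rintro ⟨t, hts, hte⟩
      obtain ⟨i, hik, rfl⟩ := suffix_hist hts
      rw [eval_cons] at hte
      rcases Nat.lt_or_ge i k with hik' | hik'
      · rcases Nat.even_or_odd i with hi | hi
        · -- i even, i < k : then v (i+1) = v i * s, so v (i+1) = v k
          have hi0 : i % 2 = 0 := Nat.even_iff.mp hi
          have h1 : eval (hist σ τ (i+1)) = eval (hist σ τ i) * sr 0 := by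
            rw [hist_succ, eval_cons, hmove i hi0]
          have h2 : eval (hist σ τ (i+1)) = eval (hist σ τ k) := by
            rw [h1, hte, mul_assoc, hss, mul_one]
          have hi1k : i + 1 < k := by
            omega
          exact eval_ne hok hi1k le_rfl h2
        · -- i odd : i = i' + 1, v i = v i' * s, so v i' = v k
          obtain ⟨i', rfl⟩ := hi
          have hi0 : (2 * i') % 2 = 0 := by omega
          have h1 : eval (hist σ τ (2 * i' + 1)) = eval (hist σ τ (2 * i')) * sr 0 := by
            rw [hist_succ, eval_cons, hmove _ hi0]
          rw [h1] at hte
          have h2 : eval (hist σ τ (2 * i')) = eval (hist σ τ k) :=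
            mul_right_cancel hte
          exact eval_ne hok (by omega) le_rfl h2
      · -- i = k : s = 1
        obtain rfl : i = k := le_antisymm hik hik'
        have h1 : eval (hist σ τ i) * 1 = eval (hist σ τ i) * sr 0 := by rwa [mul_one]
        exact sr_ne_one 0 (mul_left_cancel h1).symm
  obtain ⟨b, hb⟩ := exists_bad S σ τ
  have hEx : ∃ k, ¬ Ok S σ τ k := ⟨b, hb⟩
  let k0 := Nat.find hEx
  have hok : ∀ j < k0, Ok S σ τ j := fun j hj => by
    by_contra h; exact Nat.find_min hEx hj h
  have hbad : ¬ Ok S σ τ k0 := Nat.find_spec hEx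
  have hk0 : k0 % 2 ≠ 0 := fun h => hbad (key k0 h hok)
  refine ⟨k0, hok, hk0, ?_⟩
  rcases not_and_or.mp hbad with h | h
  · exact Or.inl h
  · exact Or.inr (not_not.mp h)

end Main
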